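/- Let θ⁰, θ₂^∞, θ₃^∞ ∈ ℂ with 2θ⁰+θ₂^∞+θ₃^∞ = 0. Let I ⊆ ℝ be an open interval with 0 ∉ I and let q₁,q₂,p₁,p₂,u : I → ℂ be differentiable with u(t) ≠ 0. Define Q(t) = [[q₁, u],[−q₂/u, q₁]], P(t) = [[p₁/2, −p₂u],[(p₂q₂−θ⁰−θ₂^∞)/u, p₁/2]]. Define A₀(t) = t·(O₂; I₂)·(P, I₂), A₁(t) = [[QP, Q],[I, −PQ+θ⁰]], A₂ = [[O, I],[O, O]], B₀(t) = −(1/t)[[O, Q],[O, O]], B₁(t) = −(O₂; I₂)·(P, I₂), and A(x,t) = A₀/x² + A₁/x + A₂, B(x,t) = B₀ + B₁/x. Then the zero-curvature equation ∂A/∂t − ∂B/∂x + [A, B] = O holds for all t ∈ I and all x ∈ ℂ ∖ {0} if and only if tQ′ = 2QPQ − θ⁰Q + t and tP′ = −2PQP + θ⁰P − 1 hold on I. -/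

import Mathlib

/-!
The Lax pair of spectral type (11)₂,(2)(2) (singularity pattern 3/2+2):
the zero-curvature equation is equivalent to the matrix Painlevé III(D₇) system
`tQ′ = 2QPQ − θ⁰Q + t`, `tP′ = −2PQP + θ⁰P − 1`.
-/

open Matrix

noncomputable section

/-- Entrywise derivative of a matrix-valued function of a real variable. -/
def matDeriv {m n : Type*} (F : ℝ → Matrix m n ℂ) (t : ℝ) : Matrix m n ℂ :=
  Matrix.of fun i j => deriv (fun s => F s i j) t

/-- `Q = [[q₁, u],[−q₂/u, q₁]]`. -/
def Qf (q1 q2 u : ℝ → ℂ) (t : ℝ) : Matrix (Fin 2) (Fin 2) ℂ :=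
  !![q1 t, u t; -(q2 t)/(u t), q1 t]

/-- `P = [[p₁/2, −p₂u],[(p₂q₂−θ)/u, p₁/2]]`. -/
def Pf (p1 p2 q2 : ℝ → ℂ) (θ : ℂ) (u : ℝ → ℂ) (t : ℝ) : Matrix (Fin 2) (Fin 2) ℂ :=
  !![p1 t/2, -(p2 t)*(u t); ((p2 t)*(q2 t) - θ)/(u t), p1 t/2]

/-- `A₀(t) = t·(O₂; I₂)·(P, I₂)`. -/
def A0f (P : Matrix (Fin 2) (Fin 2) ℂ) (t : ℂ) : Matrix (Fin 2 ⊕ Fin 2) (Fin 2 ⊕ Fin 2) ℂ :=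
  t • (fromRows (0 : Matrix (Fin 2) (Fin 2) ℂ) (1 : Matrix (Fin 2) (Fin 2) ℂ) *
    fromCols P (1 : Matrix (Fin 2) (Fin 2) ℂ))

/-- `A₁(t) = [[QP, Q],[I, −PQ+θ⁰]]`. -/
def A1f (θ0 : ℂ) (Q P : Matrix (Fin 2) (Fin 2) ℂ) : Matrix (Fin 2 ⊕ Fin 2) (Fin 2 ⊕ Fin 2) ℂ :=
  fromBlocks (Q * P) Q 1 (-(P * Q) + θ0 • (1 : Matrix (Fin 2) (Fin 2) ℂ))

/-- `A₂ = [[O, I],[O, O]]`. -/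
def A2c : Matrix (Fin 2 ⊕ Fin 2) (Fin 2 ⊕ Fin 2) ℂ := fromBlocks 0 1 0 0

/-- `B₀(t) = −(1/t)[[O, Q],[O, O]]`. -/
def B0f (Q : Matrix (Fin 2) (Fin 2) ℂ) (t : ℂ) : Matrix (Fin 2 ⊕ Fin 2) (Fin 2 ⊕ Fin 2) ℂ :=
  -(t⁻¹ • fromBlocks 0 Q 0 0)

/-- `B₁(t) = −(O₂; I₂)·(P, I₂)`. -/
def B1f (P : Matrix (Fin 2) (Fin 2) ℂ) : Matrix (Fin 2 ⊕ Fin 2) (Fin 2 ⊕ Fin 2) ℂ :=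
  -(fromRows (0 : Matrix (Fin 2) (Fin 2) ℂ) (1 : Matrix (Fin 2) (Fin 2) ℂ) *
    fromCols P (1 : Matrix (Fin 2) (Fin 2) ℂ))

/-- `A(x,t) = A₀/x² + A₁/x + A₂`. -/
def Afun (θ0 : ℂ) (Q P : ℝ → Matrix (Fin 2) (Fin 2) ℂ) (x : ℂ) (t : ℝ) :
    Matrix (Fin 2 ⊕ Fin 2) (Fin 2 ⊕ Fin 2) ℂ :=
  (x ^ 2)⁻¹ • A0f (P t) (t : ℂ) + x⁻¹ • A1f θ0 (Q t) (P t) + A2c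

/-- `B(x,t) = B₀ + B₁/x`. -/
def Bfun (Q P : ℝ → Matrix (Fin 2) (Fin 2) ℂ) (x : ℂ) (t : ℝ) :
    Matrix (Fin 2 ⊕ Fin 2) (Fin 2 ⊕ Fin 2) ℂ :=
  B0f (Q t) (t : ℂ) + x⁻¹ • B1f (P t)

/-!
Both sides of the zero-curvature equation are polynomials in `x⁻¹` with matrix coefficients, so it
holds for all `x ≠ 0` iff it holds coefficientwise (compare `x = 1` and `x = -1`). The `x⁻³` terms
cancel because `A₀ = -t B₁`, and the `x⁰` terms because `[A₂, B₀] = 0`. The `x⁻²` coefficient is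
the equation for `tP′`; the `x⁻¹` coefficient contains the equation for `tQ′` and two diagonal
blocks which are then automatic, since both `(tQ′)P + Q(tP′)` and `(tP′)Q + P(tQ′)` equal
`tP − Q` along the Painlevé system.
-/

def HasMatDerivAt {m n : Type*} (F : ℝ → Matrix m n ℂ) (F' : Matrix m n ℂ) (t : ℝ) : Prop :=
  ∀ i j, HasDerivAt (fun s => F s i j) (F' i j) t

namespace HasMatDerivAt

variable {l m n k : Type*} {F G : ℝ → Matrix m n ℂ} {F' G' : Matrix m n ℂ} {t : ℝ}

theorem matDeriv_eq (h : HasMatDerivAt F F' t) : matDeriv F t = F' := by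
  ext i j
  exact (h i j).deriv

theorem congr_deriv (h : HasMatDerivAt F F' t) (e : F' = G') : HasMatDerivAt F G' t :=
  e ▸ h

theorem of_differentiableAt (h : ∀ i j, DifferentiableAt ℝ (fun s => F s i j) t) :
    HasMatDerivAt F (matDeriv F t) t :=
  fun i j => (h i j).hasDerivAt

theorem const (M : Matrix m n ℂ) : HasMatDerivAt (fun _ => M) 0 t :=
  fun _ _ => hasDerivAt_const t _

theorem add (hF : HasMatDerivAt F F' t) (hG : HasMatDerivAt G G' t) :
    HasMatDerivAt (fun s => F s + G s) (F' + G') t :=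
  fun i j => (hF i j).add (hG i j)

theorem neg (hF : HasMatDerivAt F F' t) : HasMatDerivAt (fun s => -F s) (-F') t :=
  fun i j => (hF i j).neg

theorem const_smul (c : ℂ) (hF : HasMatDerivAt F F' t) :
    HasMatDerivAt (fun s => c • F s) (c • F') t :=
  fun i j => (hF i j).const_mul c

theorem ofReal_smul (hF : HasMatDerivAt F F' t) :
    HasMatDerivAt (fun s => (s : ℂ) • F s) (F t + (t : ℂ) • F') t := fun i j => by
  simpa using (hasDerivAt_id t).ofReal_comp.fun_mul (hF i j)

theorem mul [Fintype n] {F : ℝ → Matrix l n ℂ} {G : ℝ → Matrix n k ℂ} {F' : Matrix l n ℂ}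
    {G' : Matrix n k ℂ} (hF : HasMatDerivAt F F' t) (hG : HasMatDerivAt G G' t) :
    HasMatDerivAt (fun s => F s * G s) (F' * G t + F t * G') t := fun i j => by
  simp only [Matrix.mul_apply, Matrix.add_apply, ← Finset.sum_add_distrib]
  exact HasDerivAt.fun_sum fun r _ => by
    simpa only [add_comm] using (hF i r).fun_mul (hG r j)

theorem fromBlocks {A : ℝ → Matrix l n ℂ} {B : ℝ → Matrix l k ℂ} {C : ℝ → Matrix m n ℂ}
    {D : ℝ → Matrix m k ℂ} {A' B' C' D'} (hA : HasMatDerivAt A A' t)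
    (hB : HasMatDerivAt B B' t) (hC : HasMatDerivAt C C' t) (hD : HasMatDerivAt D D' t) :
    HasMatDerivAt (fun s => Matrix.fromBlocks (A s) (B s) (C s) (D s))
      (Matrix.fromBlocks A' B' C' D') t := by
  rintro (i | i) (j | j)
  exacts [hA i j, hB i j, hC i j, hD i j]

end HasMatDerivAt

theorem lie_quadratic_linear {K R : Type*} [CommRing K] [Ring R] [Algebra K R] (y : K)
    (A₀ A₁ A₂ B₀ B₁ : R) :
    ⁅y ^ 2 • A₀ + y • A₁ + A₂, B₀ + y • B₁⁆
      = y ^ 3 • ⁅A₀, B₁⁆ + y ^ 2 • (⁅A₀, B₀⁆ + ⁅A₁, B₁⁆) + y • (⁅A₁, B₀⁆ + ⁅A₂, B₁⁆)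
        + ⁅A₂, B₀⁆ := by
  simp only [Ring.lie_def, add_mul, mul_add, smul_mul_assoc, mul_smul_comm]
  module

theorem forall_inv_sq_smul_add_inv_smul_eq_iff {K M : Type*} [Field K] [NeZero (2 : K)]
    [AddCommGroup M] [Module K M] {a b c d : M} :
    (∀ x : K, x ≠ 0 → (x ^ 2)⁻¹ • a + x⁻¹ • b = (x ^ 2)⁻¹ • c + x⁻¹ • d) ↔ a = c ∧ b = d := by
  refine ⟨fun h => ?_, by rintro ⟨rfl, rfl⟩ _ _; rfl⟩
  have h₁ : a + b = c + d := by simpa using h 1 one_ne_zero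
  have h₂ : a - b = c - d := by simpa [sub_eq_add_neg] using h (-1) (neg_ne_zero.2 one_ne_zero)
  have two_smul_inj := smul_right_injective M (two_ne_zero (α := K))
  refine ⟨two_smul_inj ?_, two_smul_inj ?_⟩
  · simp only [two_smul]
    linear_combination (norm := module) h₁ + h₂
  · simp only [two_smul]
    linear_combination (norm := module) h₁ - h₂

section Blocks

local notation "M₄" => Matrix (Fin 2 ⊕ Fin 2) (Fin 2 ⊕ Fin 2) ℂ

variable (θ0 : ℂ) (Q P : Matrix (Fin 2) (Fin 2) ℂ) {t : ℂ}

-- `tQ′` and `tP′` as prescribed by the matrix Painlevé III(D₇) system.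
def painleveQ (t : ℂ) : Matrix (Fin 2) (Fin 2) ℂ := (2:ℂ) • (Q * P * Q) - θ0 • Q + t • 1

def painleveP : Matrix (Fin 2) (Fin 2) ℂ := -((2:ℂ) • (P * Q * P)) + θ0 • P - 1

theorem painleveQ_mul_add_mul_painleveP (t : ℂ) :
    painleveQ θ0 Q P t * P + Q * painleveP θ0 Q P = t • P - Q := by
  simp only [painleveQ, painleveP, Matrix.add_mul, Matrix.sub_mul, Matrix.mul_add,
    Matrix.mul_sub, smul_mul_assoc, mul_smul_comm, Matrix.one_mul, Matrix.mul_one,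
    Matrix.mul_neg, Matrix.mul_assoc]
  module

theorem painleveP_mul_add_mul_painleveQ (t : ℂ) :
    painleveP θ0 Q P * Q + P * painleveQ θ0 Q P t = t • P - Q := by
  simp only [painleveQ, painleveP, Matrix.add_mul, Matrix.sub_mul, Matrix.mul_add,
    Matrix.mul_sub, smul_mul_assoc, mul_smul_comm, Matrix.one_mul, Matrix.mul_one,
    Matrix.neg_mul, Matrix.mul_assoc]
  module

theorem A0f_eq : A0f P t = t • fromBlocks 0 0 P 1 := by
  simp [A0f]

theorem B1f_eq : B1f P = -fromBlocks 0 0 P 1 := by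
  simp [B1f]

theorem lie_A0f_B1f : ⁅A0f P t, B1f P⁆ = 0 := by
  simp [A0f_eq, B1f_eq, Ring.lie_def]

theorem lie_A2c_B0f : ⁅A2c, B0f Q t⁆ = 0 := by
  simp [A2c, B0f, Ring.lie_def, fromBlocks_multiply]

theorem lie_A0f_B0f_add_lie_A1f_B1f (ht : t ≠ 0) :
    ⁅A0f P t, B0f Q t⁆ + ⁅A1f θ0 Q P, B1f P⁆
      = -fromBlocks 0 0 (painleveP θ0 Q P) 0 := by
  simp only [painleveP, A0f_eq, B1f_eq, A1f, B0f, Ring.lie_def, sub_eq_add_neg, fromBlocks_smul,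
    fromBlocks_neg, fromBlocks_multiply, fromBlocks_add]
  congr 1 <;> simp only [smul_zero, smul_neg, smul_smul, mul_inv_cancel₀ ht, one_smul,
    smul_mul_assoc, mul_smul_comm, Matrix.mul_add, Matrix.add_mul, Matrix.mul_neg, Matrix.neg_mul,
    Matrix.mul_zero, Matrix.zero_mul, Matrix.mul_one, Matrix.one_mul, Matrix.mul_assoc] <;> module

theorem lie_A1f_B0f_add_lie_A2c_B1f (ht : t ≠ 0) :
    ⁅A1f θ0 Q P, B0f Q t⁆ + ⁅A2c, B1f P⁆
      = -(t⁻¹ • fromBlocks (t • P - Q) (painleveQ θ0 Q P t) 0 (Q - t • P)) := by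
  simp only [painleveQ, B1f_eq, A1f, A2c, B0f, Ring.lie_def, sub_eq_add_neg, fromBlocks_smul,
    fromBlocks_neg, fromBlocks_multiply, fromBlocks_add]
  congr 1 <;> simp only [smul_zero, smul_neg, smul_add, smul_smul, inv_mul_cancel₀ ht, one_smul,
    smul_mul_assoc, mul_smul_comm, Matrix.mul_add, Matrix.mul_neg, Matrix.neg_mul,
    Matrix.mul_zero, Matrix.zero_mul, Matrix.mul_one, Matrix.one_mul, Matrix.mul_assoc] <;> module

theorem zeroCurvature_rhs_eq (ht : t ≠ 0) (x : ℂ) :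
    -((x ^ 2)⁻¹ • B1f P) - ⁅(x ^ 2)⁻¹ • A0f P t + x⁻¹ • A1f θ0 Q P + A2c, B0f Q t + x⁻¹ • B1f P⁆
      = (x ^ 2)⁻¹ • ((fromBlocks 0 0 P 1 : M₄) + fromBlocks 0 0 (painleveP θ0 Q P) 0)
        + x⁻¹ • (t⁻¹ • fromBlocks (t • P - Q) (painleveQ θ0 Q P t) 0 (Q - t • P)) := by
  rw [← inv_pow, lie_quadratic_linear, lie_A0f_B1f, lie_A2c_B0f,
    lie_A0f_B0f_add_lie_A1f_B1f θ0 Q P ht, lie_A1f_B0f_add_lie_A2c_B1f θ0 Q P ht, B1f_eq]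
  module

theorem zeroCurvature_coeffs_iff (ht : t ≠ 0) (Q' P' : Matrix (Fin 2) (Fin 2) ℂ) :
    ((fromBlocks 0 0 P 1 : M₄) + t • fromBlocks 0 0 P' 0
          = (fromBlocks 0 0 P 1 : M₄) + fromBlocks 0 0 (painleveP θ0 Q P) 0 ∧
        fromBlocks (Q' * P + Q * P') Q' 0 (-(P' * Q + P * Q'))
          = t⁻¹ • fromBlocks (t • P - Q) (painleveQ θ0 Q P t) 0 (Q - t • P)) ↔
      t • Q' = painleveQ θ0 Q P t ∧ t • P' = painleveP θ0 Q P := by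
  rw [add_right_inj, eq_inv_smul_iff₀ ht, fromBlocks_smul, fromBlocks_smul, fromBlocks_inj,
    fromBlocks_inj]
  simp only [smul_zero, true_and, and_true]
  constructor
  · rintro ⟨hP', -, hQ', -⟩
    exact ⟨hQ', hP'⟩
  · rintro ⟨hQ', hP'⟩
    refine ⟨hP', ?_, hQ', ?_⟩
    · rw [smul_add, ← smul_mul_assoc, ← mul_smul_comm, hQ', hP',
        painleveQ_mul_add_mul_painleveP]
    · rw [smul_neg, smul_add, ← smul_mul_assoc, ← mul_smul_comm, hQ', hP',
        painleveP_mul_add_mul_painleveQ, neg_sub]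

end Blocks

theorem hasMatDerivAt_Afun (θ0 : ℂ) {Q P : ℝ → Matrix (Fin 2) (Fin 2) ℂ}
    {Q' P' : Matrix (Fin 2) (Fin 2) ℂ} {t : ℝ} (hQ : HasMatDerivAt Q Q' t)
    (hP : HasMatDerivAt P P' t) (x : ℂ) :
    HasMatDerivAt (Afun θ0 Q P x)
      ((x ^ 2)⁻¹ • (fromBlocks 0 0 (P t) 1 + (t : ℂ) • fromBlocks 0 0 P' 0)
        + x⁻¹ • fromBlocks (Q' * P t + Q t * P') Q' 0 (-(P' * Q t + P t * Q'))) t := by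
  have hA0 : HasMatDerivAt (fun s => A0f (P s) s)
      (fromBlocks 0 0 (P t) 1 + (t : ℂ) • fromBlocks 0 0 P' 0) t := by
    simp_rw [A0f_eq]
    exact ((HasMatDerivAt.const 0).fromBlocks (.const 0) hP (.const 1)).ofReal_smul
  have hA1 : HasMatDerivAt (fun s => A1f θ0 (Q s) (P s))
      (fromBlocks (Q' * P t + Q t * P') Q' 0 (-(P' * Q t + P t * Q'))) t :=
    ((hQ.mul hP).fromBlocks hQ (.const 1) ((hP.mul hQ).neg.add (.const _))).congr_deriv
      (by rw [add_zero])
  exact (((hA0.const_smul _).add (hA1.const_smul _)).add (.const A2c)).congr_deriv (add_zero _)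

section Entries

variable {q1 q2 p1 p2 u : ℝ → ℂ} {t : ℝ}

theorem hasMatDerivAt_Qf (hq1 : DifferentiableAt ℝ q1 t) (hq2 : DifferentiableAt ℝ q2 t)
    (hu : DifferentiableAt ℝ u t) (hu0 : u t ≠ 0) :
    HasMatDerivAt (Qf q1 q2 u) (matDeriv (Qf q1 q2 u) t) t :=
  .of_differentiableAt fun i j => by
    fin_cases i <;> fin_cases j <;>
      simp only [Qf, Fin.zero_eta, Fin.mk_one, Fin.isValue, of_apply, cons_val', cons_val_zero,
        cons_val_one, cons_val_fin_one] <;>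
      fun_prop (disch := exact hu0)

theorem hasMatDerivAt_Pf (θ : ℂ) (hq2 : DifferentiableAt ℝ q2 t) (hp1 : DifferentiableAt ℝ p1 t)
    (hp2 : DifferentiableAt ℝ p2 t) (hu : DifferentiableAt ℝ u t) (hu0 : u t ≠ 0) :
    HasMatDerivAt (Pf p1 p2 q2 θ u) (matDeriv (Pf p1 p2 q2 θ u) t) t :=
  .of_differentiableAt fun i j => by
    fin_cases i <;> fin_cases j <;>
      simp only [Pf, Fin.zero_eta, Fin.mk_one, Fin.isValue, of_apply, cons_val', cons_val_zero,
        cons_val_one, cons_val_fin_one] <;>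
      fun_prop (disch := exact hu0)

end Entries

theorem zeroCurvature_iff_painleve (θ0 : ℂ) {Q P : ℝ → Matrix (Fin 2) (Fin 2) ℂ} {t : ℝ}
    (ht : t ≠ 0) (hQ : HasMatDerivAt Q (matDeriv Q t) t) (hP : HasMatDerivAt P (matDeriv P t) t) :
    (∀ x : ℂ, x ≠ 0 →
        matDeriv (fun s => Afun θ0 Q P x s) t
          = -((x ^ 2)⁻¹ • B1f (P t))
            - (Afun θ0 Q P x t * Bfun Q P x t - Bfun Q P x t * Afun θ0 Q P x t)) ↔
      (t : ℂ) • matDeriv Q t = painleveQ θ0 (Q t) (P t) t ∧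
        (t : ℂ) • matDeriv P t = painleveP θ0 (Q t) (P t) := by
  have htC : (t : ℂ) ≠ 0 := by exact_mod_cast ht
  rw [← zeroCurvature_coeffs_iff θ0 (Q t) (P t) htC,
    ← forall_inv_sq_smul_add_inv_smul_eq_iff (K := ℂ)]
  refine forall₂_congr fun x _ => ?_
  rw [(hasMatDerivAt_Afun θ0 hQ hP x).matDeriv_eq, ← Ring.lie_def, Afun, Bfun,
    zeroCurvature_rhs_eq θ0 _ _ htC]

theorem lax_pair_11_2_2_2_general
    (θ0 θi2 : ℂ)
    (α β : ℝ) (h0 : (0:ℝ) ∉ Set.Ioo α β)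
    (q1 q2 p1 p2 u : ℝ → ℂ)
    (hdiff : ∀ t ∈ Set.Ioo α β, DifferentiableAt ℝ q1 t ∧ DifferentiableAt ℝ q2 t ∧
      DifferentiableAt ℝ p1 t ∧ DifferentiableAt ℝ p2 t ∧ DifferentiableAt ℝ u t)
    (hu : ∀ t ∈ Set.Ioo α β, u t ≠ 0)
    (Q P : ℝ → Matrix (Fin 2) (Fin 2) ℂ)
    (hQ : Q = Qf q1 q2 u) (hP : P = Pf p1 p2 q2 (θ0 + θi2) u) :
    -- zero curvature:  ∂A/∂t − ∂B/∂x + [A,B] = O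
    (∀ t ∈ Set.Ioo α β, ∀ x : ℂ, x ≠ 0 →
        matDeriv (fun s => Afun θ0 Q P x s) t
          = -((x ^ 2)⁻¹ • B1f (P t))
            - (Afun θ0 Q P x t * Bfun Q P x t - Bfun Q P x t * Afun θ0 Q P x t))
    ↔
    -- `tQ′ = 2QPQ − θ⁰Q + t` and `tP′ = −2PQP + θ⁰P − 1`
    ((∀ t ∈ Set.Ioo α β,
        (t : ℂ) • matDeriv Q t
          = (2:ℂ) • (Q t * P t * Q t) - θ0 • Q t + (t : ℂ) • (1 : Matrix (Fin 2) (Fin 2) ℂ)) ∧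
      (∀ t ∈ Set.Ioo α β,
        (t : ℂ) • matDeriv P t
          = -((2:ℂ) • (P t * Q t * P t)) + θ0 • P t - (1 : Matrix (Fin 2) (Fin 2) ℂ))) := by
  subst hQ hP
  rw [← forall₂_and]
  refine forall₂_congr fun t ht => ?_
  obtain ⟨hq1, hq2, hp1, hp2, hu'⟩ := hdiff t ht
  exact zeroCurvature_iff_painleve θ0 (ne_of_mem_of_not_mem ht h0)
    (hasMatDerivAt_Qf hq1 hq2 hu' (hu t ht)) (hasMatDerivAt_Pf _ hq2 hp1 hp2 hu' (hu t ht))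

theorem lax_pair_11_2_2_2
    (θ0 θi2 θi3 : ℂ) (hFuchs : 2*θ0 + θi2 + θi3 = 0)
    (α β : ℝ) (h0 : (0:ℝ) ∉ Set.Ioo α β)
    (q1 q2 p1 p2 u : ℝ → ℂ)
    (hdiff : ∀ t ∈ Set.Ioo α β, DifferentiableAt ℝ q1 t ∧ DifferentiableAt ℝ q2 t ∧
      DifferentiableAt ℝ p1 t ∧ DifferentiableAt ℝ p2 t ∧ DifferentiableAt ℝ u t)
    (hu : ∀ t ∈ Set.Ioo α β, u t ≠ 0)
    (Q P : ℝ → Matrix (Fin 2) (Fin 2) ℂ)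
    (hQ : Q = Qf q1 q2 u) (hP : P = Pf p1 p2 q2 (θ0 + θi2) u) :
    -- zero curvature:  ∂A/∂t − ∂B/∂x + [A,B] = O
    (∀ t ∈ Set.Ioo α β, ∀ x : ℂ, x ≠ 0 →
        matDeriv (fun s => Afun θ0 Q P x s) t
          = -((x ^ 2)⁻¹ • B1f (P t))
            - (Afun θ0 Q P x t * Bfun Q P x t - Bfun Q P x t * Afun θ0 Q P x t))
    ↔
    -- `tQ′ = 2QPQ − θ⁰Q + t` and `tP′ = −2PQP + θ⁰P − 1`
    ((∀ t ∈ Set.Ioo α β,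
        (t : ℂ) • matDeriv Q t
          = (2:ℂ) • (Q t * P t * Q t) - θ0 • Q t + (t : ℂ) • (1 : Matrix (Fin 2) (Fin 2) ℂ)) ∧
      (∀ t ∈ Set.Ioo α β,
        (t : ℂ) • matDeriv P t
          = -((2:ℂ) • (P t * Q t * P t)) + θ0 • P t - (1 : Matrix (Fin 2) (Fin 2) ℂ))) :=
  lax_pair_11_2_2_2_general θ0 θi2 α β h0 q1 q2 p1 p2 u hdiff hu Q P hQ hP

end
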